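/- Let R be a commutative ring and M a semisimple R-module. If M is Rad-supplementing, then M is pure-injective. -/

import Mathlib

universe u v

/-- The radical of a module: the intersection of all maximal submodules. -/
def moduleRad (R : Type u) [Ring R] (M : Type v) [AddCommGroup M] [Module R M] :
    Submodule R M :=
  sInf {m : Submodule R M | IsCoatom m}

/-- `V` is a Rad-supplement of `U` in the ambient module: `U + V = ⊤` and
`U ⊓ V ≤ Rad V` (viewed inside the ambient module). -/
def IsRadSupplementOf (R : Type u) [Ring R] {N : Type v} [AddCommGroup N] [Module R N]
    (U V : Submodule R N) : Prop :=
  U ⊔ V = ⊤ ∧ U ⊓ V ≤ Submodule.map V.subtype (moduleRad R V)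

/-- `M` is Rad-supplementing: in every module containing it (i.e. every embedding into a
module `N`), its image has a Rad-supplement. -/
def IsRadSupplementing (R : Type u) [Ring R] (M : Type v) [AddCommGroup M] [Module R M] :
    Prop :=
  ∀ (N : ModuleCat.{v} R) (f : M →ₗ[R] N), Function.Injective f →
    ∃ V : Submodule R N, IsRadSupplementOf R (LinearMap.range f) V

/-- `M` is pure-injective: its image is a direct summand in every pure extension,
where an embedding `f : M → N` is pure if `Q ⊗ f` is injective for every module `Q`. -/
def IsPureInjective (R : Type u) [CommRing R] (M : Type v) [AddCommGroup M]
    [Module R M] : Prop :=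
  ∀ (N : ModuleCat.{v} R) (f : M →ₗ[R] N), Function.Injective f →
    (∀ (Q : ModuleCat.{v} R), Function.Injective (LinearMap.lTensor (Q : Type v) f)) →
    ∃ W : Submodule R N, IsCompl (LinearMap.range f) W

/-!
Let `V` be a Rad-supplement of the image of a pure embedding `f : M → N`. Then
`f M ⊓ V ≤ Rad V ≤ Rad N`, and purity forces `f⁻¹ (Rad N) ≤ Rad M`: for a maximal
submodule `m` of `M` we have `M ⧸ m ≅ R ⧸ 𝔪` with `𝔪` maximal and `𝔪 M ≤ m`; tensoring
with `R ⧸ 𝔪` shows `f⁻¹ (𝔪 N) ≤ 𝔪 M`, while `Rad N ≤ 𝔪 N` because `N ⧸ 𝔪 N` is a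
vector space over `R ⧸ 𝔪`. As `M` is semisimple, `Rad M = 0`, so `f M ⊓ V = 0` and `V`
is a complement.
-/

open Submodule TensorProduct

section Ring

variable {R : Type*} [Ring R] {M : Type*} [AddCommGroup M] [Module R M]

lemma Module.jacobson_le_smul_top (I : Ideal R) [I.IsTwoSided] [IsSemisimpleRing (R ⧸ I)] :
    Module.jacobson R M ≤ I • ⊤ := by
  let q : M →ₛₗ[Ideal.Quotient.mk I] M ⧸ I • (⊤ : Submodule R M) :=
    { toFun := Submodule.Quotient.mk, map_add' := fun _ _ ↦ rfl, map_smul' := fun _ _ ↦ rfl }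
  exact fun x hx ↦ (Submodule.Quotient.mk_eq_zero _).mp <|
    IsSemisimpleModule.jacobson_le_ker R (R ⧸ I) M _ q hx

lemma smul_top_le_of_quotient_equiv {m : Submodule R M} {I : Ideal R} [I.IsTwoSided]
    (e : (M ⧸ m) ≃ₗ[R] R ⧸ I) : I • (⊤ : Submodule R M) ≤ m := by
  refine Submodule.smul_le.mpr fun r hr y _ ↦ ?_
  rw [← Ideal.annihilator_quotient (I := I), ← e.annihilator_eq, annihilator_quotient] at hr
  exact mem_colon.mp hr y trivial

end Ring

section CommRing

variable {R : Type*} [CommRing R] {M N : Type*} [AddCommGroup M] [Module R M]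
  [AddCommGroup N] [Module R N]

lemma LinearMap.lTensor_injective_of_equiv {Q Q' : Type*} [AddCommGroup Q] [Module R Q]
    [AddCommGroup Q'] [Module R Q'] (e : Q ≃ₗ[R] Q') (f : M →ₗ[R] N)
    (hf : Function.Injective (f.lTensor Q)) : Function.Injective (f.lTensor Q') := by
  have : f.lTensor Q' =
      (e.rTensor N).toLinearMap ∘ₗ f.lTensor Q ∘ₗ (e.symm.rTensor M).toLinearMap := by
    ext; simp
  rw [this]
  exact (e.rTensor N).injective.comp (hf.comp (e.symm.rTensor M).injective)

lemma comap_smul_top_le_of_lTensor_injective (I : Ideal R) (f : M →ₗ[R] N)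
    (hf : Function.Injective (f.lTensor (R ⧸ I))) :
    (I • ⊤ : Submodule R N).comap f ≤ I • ⊤ := by
  intro x hx
  rw [mem_comap, ← Submodule.Quotient.mk_eq_zero] at hx
  have h1x : f.lTensor (R ⧸ I) (1 ⊗ₜ x) = 0 := by
    rw [LinearMap.lTensor_tmul, ← quotTensorEquivQuotSMul_symm_mk, hx, map_zero]
  rw [← Submodule.Quotient.mk_eq_zero, ← (quotTensorEquivQuotSMul M I).symm.map_eq_zero_iff,
    quotTensorEquivQuotSMul_symm_mk]
  exact (injective_iff_map_eq_zero _).mp hf _ h1x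

lemma comap_jacobson_le_of_lTensor_injective (f : M →ₗ[R] N)
    (hf : ∀ m : Submodule R M, IsCoatom m → Function.Injective (f.lTensor (M ⧸ m))) :
    (Module.jacobson R N).comap f ≤ Module.jacobson R M := by
  intro x hx
  refine mem_sInf.mpr fun m hm ↦ ?_
  obtain ⟨I, hI, ⟨e⟩⟩ :=
    isSimpleModule_iff_quot_maximal.mp (isSimpleModule_iff_isCoatom.mpr hm)
  let _ := Ideal.Quotient.field I
  have hfI := LinearMap.lTensor_injective_of_equiv e f (hf m hm)
  exact smul_top_le_of_quotient_equiv e <|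
    comap_smul_top_le_of_lTensor_injective I f hfI (Module.jacobson_le_smul_top I hx)

end CommRing

/-- Over a commutative ring, a semisimple Rad-supplementing module is pure-injective. -/
theorem pureInjective_of_semisimple_radSupplementing
    (R : Type u) [CommRing R] (M : Type v) [AddCommGroup M] [Module R M]
    [IsSemisimpleModule R M] (h : IsRadSupplementing R M) :
    IsPureInjective R M := by
  intro N f hf hpure
  obtain ⟨V, hsup, hle⟩ := h N f hf
  -- `moduleRad` unfolds to `Module.jacobson`.
  have hradV : LinearMap.range f ⊓ V ≤ Module.jacobson R N :=
    hle.trans (Module.map_jacobson_le V.subtype)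
  have hcomap : (Module.jacobson R N).comap f = ⊥ := le_bot_iff.mp <|
    (comap_jacobson_le_of_lTensor_injective f fun m _ ↦ hpure (ModuleCat.of R (M ⧸ m))).trans
      (IsSemisimpleModule.jacobson_eq_bot R M).le
  refine ⟨V, disjoint_iff_inf_le.mpr ?_, codisjoint_iff.mpr hsup⟩
  calc LinearMap.range f ⊓ V
      ≤ LinearMap.range f ⊓ Module.jacobson R N := le_inf inf_le_left hradV
    _ = ((Module.jacobson R N).comap f).map f := (map_comap_eq f _).symm
    _ = ⊥ := by rw [hcomap, Submodule.map_bot]
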